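/- Uniqueness of the zero fixed point (Lemma in Appendix, 'alphaglobal'): Suppose φ and ψ satisfy Assumption A, and let α ∈ (0,1) satisfy α > α1 := sup_{x>0} φ′(x)/(φ′(x)+1) and α > α2 := sup_{x>0} ψ′(x)/(ψ′(x)+1), so that the fixed-point functions Ψ₁ and Ψ₂ are well defined. If Ψ₁(Ψ₂(x)) < x for every x ∈ (0, sup_{u≥0} φ(u)), then (τ_S, τ_L) = (0, 0) is the only solution in [0,∞)×[0,∞) of the fixed-point system τ_S = φ((1/α − 1)·τ_S + (1/α)·τ_L), τ_L = ψ((1/α − 1)·τ_L + (1/α)·τ_S). -/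

import Mathlib

/-!
With `c = 1/α - 1`, the condition `sup φ'/(φ'+1) < α` says exactly `c φ' < 1` on `(0, ∞)`,
so for every `m ≥ 0` the map `t ↦ φ(c t + m) - t` is strictly decreasing on `[0, ∞)` and
`t = φ(c t + m)` has at most one solution `t ≥ 0`; likewise for `ψ`. Since `φ 0 = ψ 0 = 0`,
a solution with one coordinate zero is `(0, 0)`. A solution with both coordinates positive
would satisfy `τL = Ψ₂ τS` and `τS = Ψ₁ τL`, i.e. `Ψ₁ (Ψ₂ τS) = τS`, while `τS`, being a value
of the strictly increasing `φ`, lies strictly below `sup φ`: this contradicts the hypothesis.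
-/

open Set

lemma deriv_nonneg_of_monotoneOn_Ici {f : ℝ → ℝ} {a x : ℝ} (hf : MonotoneOn f (Ici a))
    (hx : a < x) : 0 ≤ deriv f x := by
  rw [← derivWithin_of_mem_nhds (Ici_mem_nhds hx)]
  exact hf.derivWithin_nonneg

lemma mul_deriv_lt_one_of_sSup_lt {f : ℝ → ℝ} {α x : ℝ} (hα : 0 < α)
    (hf : MonotoneOn f (Ici 0))
    (hsup : sSup {y : ℝ | ∃ x > 0, y = deriv f x / (deriv f x + 1)} < α) (hx : 0 < x) :
    (1/α - 1) * deriv f x < 1 := by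
  have hbdd : BddAbove {y : ℝ | ∃ x > 0, y = deriv f x / (deriv f x + 1)} := by
    refine ⟨1, ?_⟩
    rintro _ ⟨z, hz, rfl⟩
    have := deriv_nonneg_of_monotoneOn_Ici hf hz
    rw [div_le_one (by linarith)]
    linarith
  have hd := deriv_nonneg_of_monotoneOn_Ici hf hx
  have hlt : deriv f x / (deriv f x + 1) < α := (le_csSup hbdd ⟨x, hx, rfl⟩).trans_lt hsup
  rw [div_lt_iff₀ (by linarith)] at hlt
  have : deriv f x / α < deriv f x + 1 := (div_lt_iff₀ hα).mpr (by linarith)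
  rw [sub_mul, div_mul_eq_mul_div, one_mul]
  linarith

lemma strictAntiOn_comp_affine_sub {f : ℝ → ℝ} {c m : ℝ} (hc : 0 < c) (hm : 0 ≤ m)
    (hcont : ContinuousOn f (Ici 0)) (hd : DifferentiableOn ℝ f (Ioi 0))
    (hslope : ∀ x > 0, c * deriv f x < 1) :
    StrictAntiOn (fun t ↦ f (c * t + m) - t) (Ici 0) := by
  refine strictAntiOn_of_deriv_neg (convex_Ici 0) ?_ fun t ht ↦ ?_
  · refine (hcont.comp (by fun_prop) fun t ht ↦ ?_).sub continuousOn_id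
    exact add_nonneg (mul_nonneg hc.le ht) hm
  · rw [interior_Ici] at ht
    have hpos : 0 < c * t + m := add_pos_of_pos_of_nonneg (mul_pos hc ht) hm
    have hf : HasDerivAt f (deriv f (c * t + m)) (c * t + m) :=
      (hd.differentiableAt (Ioi_mem_nhds hpos)).hasDerivAt
    have hlin : HasDerivAt (fun t ↦ c * t + m) c t := by
      simpa using ((hasDerivAt_id t).const_mul c).add_const m
    have hg : HasDerivAt (fun t ↦ f (c * t + m) - t) (deriv f (c * t + m) * c - 1) t :=
      (hf.comp t hlin).sub (hasDerivAt_id t)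
    rw [hg.deriv]
    linarith [hslope _ hpos, mul_comm c (deriv f (c * t + m))]

lemma eq_of_fixedPoints_comp_affine {f : ℝ → ℝ} {α m : ℝ} (hα : α ∈ Ioo (0:ℝ) 1)
    (hf : MonotoneOn f (Ici 0)) (hd : DifferentiableOn ℝ f (Ici 0))
    (hsup : sSup {y : ℝ | ∃ x > 0, y = deriv f x / (deriv f x + 1)} < α) (hm : 0 ≤ m)
    ⦃t₁ t₂ : ℝ⦄ (h₁ : 0 ≤ t₁) (h₂ : 0 ≤ t₂)
    (e₁ : f ((1/α - 1) * t₁ + m) = t₁) (e₂ : f ((1/α - 1) * t₂ + m) = t₂) :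
    t₁ = t₂ := by
  have hc : 0 < 1/α - 1 := by
    rw [sub_pos, lt_div_iff₀ hα.1]
    linarith [hα.2]
  refine (strictAntiOn_comp_affine_sub hc hm hd.continuousOn (hd.mono Ioi_subset_Ici_self)
    fun x hx ↦ mul_deriv_lt_one_of_sSup_lt hα.1 hf hsup hx).injOn h₁ h₂ ?_
  simp only [e₁, e₂, sub_self]

lemma coe_lt_iSup_Ici_of_strictMonoOn {f : ℝ → ℝ} {x : ℝ} (hf : StrictMonoOn f (Ici 0))
    (hx : 0 ≤ x) : (f x : EReal) < ⨆ u : Ici (0:ℝ), (f u.1 : EReal) :=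
  calc (f x : EReal) < f (x + 1) := EReal.coe_lt_coe_iff.mpr (hf hx (by simp; linarith) (by simp))
    _ ≤ ⨆ u : Ici (0:ℝ), (f u.1 : EReal) :=
      le_iSup (fun u : Ici (0:ℝ) ↦ (f u.1 : EReal)) ⟨x + 1, by simp; linarith⟩

theorem stmt6_general (φ ψ : ℝ → ℝ) (α : ℝ) (Ψ₁ Ψ₂ : ℝ → ℝ)
    (hφ0 : φ 0 = 0) (hψ0 : ψ 0 = 0)
    (hφm : StrictMonoOn φ (Set.Ici 0)) (hψm : StrictMonoOn ψ (Set.Ici 0))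
    (hφd : DifferentiableOn ℝ φ (Set.Ici 0)) (hψd : DifferentiableOn ℝ ψ (Set.Ici 0))
    (hα : α ∈ Set.Ioo (0:ℝ) 1)
    (hα1 : sSup {y : ℝ | ∃ x > 0, y = deriv φ x / (deriv φ x + 1)} < α)
    (hα2 : sSup {y : ℝ | ∃ x > 0, y = deriv ψ x / (deriv ψ x + 1)} < α)
    (hΨ₁ : ∀ y : ℝ, 0 < y →
      0 < Ψ₁ y ∧ φ ((1/α - 1) * Ψ₁ y + (1/α) * y) = Ψ₁ y)
    (hΨ₂ : ∀ y : ℝ, 0 < y →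
      0 < Ψ₂ y ∧ ψ ((1/α - 1) * Ψ₂ y + (1/α) * y) = Ψ₂ y)
    (hcontr : ∀ x : ℝ, 0 < x →
      ((x : EReal) < ⨆ u : Set.Ici (0:ℝ), (φ u.1 : EReal)) →
      Ψ₁ (Ψ₂ x) < x) :
    ∀ τS τL : ℝ, 0 ≤ τS → 0 ≤ τL →
      τS = φ ((1/α - 1) * τS + (1/α) * τL) →
      τL = ψ ((1/α - 1) * τL + (1/α) * τS) →
      τS = 0 ∧ τL = 0 := by
  intro τS τL hS hL eS eL
  have hc : 0 ≤ 1/α - 1 := sub_nonneg.mpr (one_le_one_div hα.1 hα.2.le)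
  have hm : ∀ {τ}, 0 ≤ τ → 0 ≤ 1/α * τ := mul_nonneg (one_div_pos.mpr hα.1).le
  have hφu := eq_of_fixedPoints_comp_affine hα hφm.monotoneOn hφd hα1 (hm hL)
  have hψu := eq_of_fixedPoints_comp_affine hα hψm.monotoneOn hψd hα2 (hm hS)
  have hS0 : τL = 0 → τS = 0 := fun h ↦ hφu hS le_rfl eS.symm (by simp [h, hφ0])
  rcases hS.eq_or_lt with h | hSpos
  · exact ⟨h.symm, hψu hL le_rfl eL.symm (by simp [← h, hψ0])⟩
  have hLpos : 0 < τL := hL.lt_of_ne fun h ↦ hSpos.ne' (hS0 h.symm)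
  have hL₂ : τL = Ψ₂ τS := hψu hL (hΨ₂ τS hSpos).1.le eL.symm (hΨ₂ τS hSpos).2
  have hS₁ : τS = Ψ₁ τL := hφu hS (hΨ₁ τL hLpos).1.le eS.symm (hΨ₁ τL hLpos).2
  have hbelow : (τS : EReal) < ⨆ u : Set.Ici (0:ℝ), (φ u.1 : EReal) :=
    eS ▸ coe_lt_iSup_Ici_of_strictMonoOn hφm (add_nonneg (mul_nonneg hc hS) (hm hL))
  exact ((hcontr τS hSpos hbelow).ne (by rw [← hL₂, ← hS₁])).elim

/-- Uniqueness of the zero fixed point ('alphaglobal'): under Assumption A,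
`α > α1`, `α > α2`, and the contraction condition `Ψ₁(Ψ₂(x)) < x` on
`(0, sup_{u≥0} φ(u))`, the pair `(0,0)` is the only nonnegative solution of
the fixed-point system. -/
theorem stmt6 (φ ψ : ℝ → ℝ) (α : ℝ) (Ψ₁ Ψ₂ : ℝ → ℝ)
    (hφnn : ∀ x ∈ Set.Ici (0:ℝ), 0 ≤ φ x)
    (hψnn : ∀ x ∈ Set.Ici (0:ℝ), 0 ≤ ψ x)
    (hφ0 : φ 0 = 0) (hψ0 : ψ 0 = 0)
    (hφc : ContinuousOn φ (Set.Ici 0)) (hψc : ContinuousOn ψ (Set.Ici 0))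
    (hφm : StrictMonoOn φ (Set.Ici 0)) (hψm : StrictMonoOn ψ (Set.Ici 0))
    (hφd : DifferentiableOn ℝ φ (Set.Ici 0)) (hψd : DifferentiableOn ℝ ψ (Set.Ici 0))
    (hφd' : ContinuousOn (deriv φ) (Set.Ici 0)) (hψd' : ContinuousOn (deriv ψ) (Set.Ici 0))
    (hα : α ∈ Set.Ioo (0:ℝ) 1)
    (hα1 : sSup {y : ℝ | ∃ x > 0, y = deriv φ x / (deriv φ x + 1)} < α)
    (hα2 : sSup {y : ℝ | ∃ x > 0, y = deriv ψ x / (deriv ψ x + 1)} < α)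
    (hΨ₁0 : Ψ₁ 0 = 0)
    (hΨ₁ : ∀ y : ℝ, 0 < y →
      0 < Ψ₁ y ∧ φ ((1/α - 1) * Ψ₁ y + (1/α) * y) = Ψ₁ y)
    (hΨ₂0 : Ψ₂ 0 = 0)
    (hΨ₂ : ∀ y : ℝ, 0 < y →
      0 < Ψ₂ y ∧ ψ ((1/α - 1) * Ψ₂ y + (1/α) * y) = Ψ₂ y)
    (hcontr : ∀ x : ℝ, 0 < x →
      ((x : EReal) < ⨆ u : Set.Ici (0:ℝ), (φ u.1 : EReal)) →
      Ψ₁ (Ψ₂ x) < x) :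
    ∀ τS τL : ℝ, 0 ≤ τS → 0 ≤ τL →
      τS = φ ((1/α - 1) * τS + (1/α) * τL) →
      τL = ψ ((1/α - 1) * τL + (1/α) * τS) →
      τS = 0 ∧ τL = 0 :=
  stmt6_general φ ψ α Ψ₁ Ψ₂ hφ0 hψ0 hφm hψm hφd hψd hα hα1 hα2 hΨ₁ hΨ₂ hcontr
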